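/- Let G be a finite connected simple graph of genus g = |E(G)| − |V(G)| + 1, and suppose g ≥ 2. Then gon(G) ≤ g. -/

import Mathlib

open Finset
open scoped Classical

namespace SimpleGraph

variable {V : Type*}

/-- A divisor `D : V → ℤ` is effective if all its values are nonnegative. -/
def Effective (D : V → ℤ) : Prop := ∀ v, 0 ≤ D v

/-- The Laplacian of `G` applied to `x : V → ℤ`:
`(lap G x) v = deg(v)·x(v) − ∑_{u ~ v} x(u) = ∑_{u ~ v} (x v − x u)`. -/
noncomputable def lap [Fintype V] (G : SimpleGraph V) (x : V → ℤ) : V → ℤ :=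
  fun v => ∑ u, if G.Adj v u then x v - x u else 0

/-- Two divisors are (linearly) equivalent if they differ by a Laplacian image. -/
def LinEquiv [Fintype V] (G : SimpleGraph V) (D D' : V → ℤ) : Prop :=
  ∃ x : V → ℤ, D - D' = G.lap x

/-- A divisor has positive rank if for every vertex `v`, subtracting one chip at `v`
yields a divisor equivalent to an effective divisor. -/
def PosRank [Fintype V] (G : SimpleGraph V) (D : V → ℤ) : Prop :=
  ∀ v : V, ∃ E : V → ℤ, Effective E ∧
    G.LinEquiv (D - fun u => if u = v then (1 : ℤ) else 0) E

/-- The gonality of `G`: the minimum degree of an effective divisor of positive rank. -/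
noncomputable def gonality [Fintype V] (G : SimpleGraph V) : ℕ :=
  sInf {n : ℕ | ∃ D : V → ℤ, Effective D ∧ G.PosRank D ∧ (∑ v, D v) = (n : ℤ)}

/-- The genus of `G`: `|E| − |V| + 1`. -/
noncomputable def genus [Fintype V] (G : SimpleGraph V) : ℤ :=
  (Nat.card G.edgeSet : ℤ) - (Fintype.card V : ℤ) + 1

end SimpleGraph

open SimpleGraph


section Gon
variable {V : Type*} [Fintype V] (G : SimpleGraph V)


lemma lap_sub (x y : V → ℤ) : G.lap (x - y) = G.lap x - G.lap y := by
  funext v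
  simp only [SimpleGraph.lap, Pi.sub_apply, ← Finset.sum_sub_distrib]
  refine Finset.sum_congr rfl fun u _ => ?_
  by_cases h : G.Adj v u <;> simp [h] <;> ring

lemma sum_lap (x : V → ℤ) : ∑ v, G.lap x v = 0 := by
  have h : ∑ v, G.lap x v = ∑ v, ∑ u, (if G.Adj v u then x v - x u else 0) := rfl
  rw [h]
  have h2 : ∑ v, ∑ u, (if G.Adj v u then x v - x u else 0)
      = ∑ u, ∑ v, (if G.Adj v u then x v - x u else 0) := Finset.sum_comm
  have h3 : ∑ u : V, ∑ v : V, (if G.Adj v u then x v - x u else 0)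
      = -∑ v, ∑ u, (if G.Adj v u then x v - x u else 0) := by
    rw [← Finset.sum_neg_distrib]
    refine Finset.sum_congr rfl fun u _ => ?_
    rw [← Finset.sum_neg_distrib]
    refine Finset.sum_congr rfl fun v _ => ?_
    by_cases hadj : G.Adj v u
    · simp only [hadj, hadj.symm, if_true]; ring
    · have : ¬ G.Adj u v := fun h => hadj h.symm
      simp [hadj, this]
  omega

lemma lap_mul_symm (x y : V → ℤ) :
    ∑ v, y v * G.lap x v = ∑ v, x v * G.lap y v := by
  have expand : ∀ (a b : V → ℤ), ∑ v, a v * G.lap b v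
      = ∑ v, ∑ u, (if G.Adj v u then a v * b v - a v * b u else 0) := by
    intro a b
    refine Finset.sum_congr rfl fun v _ => ?_
    rw [SimpleGraph.lap, Finset.mul_sum]
    refine Finset.sum_congr rfl fun u _ => ?_
    by_cases h : G.Adj v u <;> simp [h] <;> ring
  rw [expand, expand]
  have split : ∀ (a b : V → ℤ), ∑ v, ∑ u, (if G.Adj v u then a v * b v - a v * b u else 0)
      = (∑ v, ∑ u, (if G.Adj v u then a v * b v else 0))
        - ∑ v, ∑ u, (if G.Adj v u then a v * b u else 0) := by
    intro a b
    rw [← Finset.sum_sub_distrib]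
    refine Finset.sum_congr rfl fun v _ => ?_
    rw [← Finset.sum_sub_distrib]
    refine Finset.sum_congr rfl fun u _ => ?_
    by_cases h : G.Adj v u <;> simp [h]
  rw [split, split]
  congr 1
  · refine Finset.sum_congr rfl fun v _ => Finset.sum_congr rfl fun u _ => ?_
    by_cases h : G.Adj v u <;> simp [h] <;> ring
  · rw [Finset.sum_comm]
    refine Finset.sum_congr rfl fun u _ => Finset.sum_congr rfl fun v _ => ?_
    by_cases h : G.Adj v u
    · simp only [h, h.symm, if_true]; ring
    · have : ¬ G.Adj u v := fun h2 => h h2.symm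
      simp [h, this]

lemma lap_intmul (c : ℤ) (x : V → ℤ) : G.lap (fun v => c * x v) = fun v => c * G.lap x v := by
  funext v
  show _ = c * ∑ u, (if G.Adj v u then x v - x u else 0)
  rw [Finset.mul_sum]
  refine Finset.sum_congr rfl fun u _ => ?_
  by_cases h : G.Adj v u <;> simp [h] <;> ring


lemma exists_closer_neighbor (hG : G.Connected) (q v : V) (hv : v ≠ q) :
    ∃ u, G.Adj v u ∧ G.dist q u + 1 = G.dist q v := by
  obtain ⟨p, hp⟩ := (hG q v).exists_walk_length_eq_dist
  obtain ⟨u, hadj, p', hcons⟩ := SimpleGraph.Walk.exists_eq_cons_of_ne hv p.reverse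
  refine ⟨u, hadj, ?_⟩
  have h1 : G.dist q u ≤ p'.length := by
    have := SimpleGraph.dist_le p'
    rwa [SimpleGraph.dist_comm] at this
  have h2 : p'.length + 1 = G.dist q v := by
    have : p.reverse.length = G.dist q v := by rw [SimpleGraph.Walk.length_reverse, hp]
    rw [hcons] at this
    simpa using this
  have h3 : G.dist q v ≤ G.dist q u + 1 := by
    obtain ⟨p2, hp2⟩ := (hG q u).exists_walk_length_eq_dist
    have := SimpleGraph.dist_le (p2.concat hadj.symm)
    rwa [SimpleGraph.Walk.length_concat, hp2] at this
  omega

lemma dist_lt_card (hG : G.Connected) (q v : V) : G.dist q v < Fintype.card V := by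
  obtain ⟨p, hp⟩ := (hG q v).exists_walk_length_eq_dist
  have h1 : G.dist q v ≤ p.bypass.length := SimpleGraph.dist_le _
  have h2 := (SimpleGraph.Walk.bypass_isPath p).length_lt
  omega

lemma exists_pot (hG : G.Connected) (q : V) :
    ∃ w : V → ℤ, w q = 0 ∧ (∀ v, 0 ≤ w v) ∧
      ∀ v, v ≠ q → 1 ≤ G.lap w v := by
  classical
  have hne : Nonempty V := hG.nonempty
  set n := Fintype.card V with hn
  set B : ℤ := (n : ℤ) + 2 with hB
  have hB1 : 1 ≤ B := by
    have : 0 < n := Fintype.card_pos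
    omega
  set d : V → ℕ := fun v => G.dist q v with hd
  have hdlt : ∀ v, d v < n := fun v => dist_lt_card G hG q v
  set w : V → ℤ := fun v => B ^ n - B ^ (n - d v) with hw
  refine ⟨w, ?_, ?_, ?_⟩
  · show B ^ n - B ^ (n - d q) = 0
    have : d q = 0 := SimpleGraph.dist_self
    simp [this]
  · intro v
    show 0 ≤ B ^ n - B ^ (n - d v)
    have : B ^ (n - d v) ≤ B ^ n := pow_le_pow_right₀ hB1 (Nat.sub_le n (d v))
    omega
  · intro v hv
    have hn2 : 2 ≤ n := by
      rw [hn]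
      exact Fintype.one_lt_card_iff_nontrivial.mpr ⟨⟨v, q, hv⟩⟩
    obtain ⟨u0, hadj0, hd0⟩ := exists_closer_neighbor G hG q v hv
    have hd0' : d u0 + 1 = d v := hd0
    have hdv1 : 1 ≤ d v := by omega
    set N : Finset V := univ.filter (fun u => G.Adj v u) with hN
    have hsum : G.lap w v = ∑ u ∈ N, (w v - w u) := by
      rw [SimpleGraph.lap, hN, Finset.sum_filter]
    have hu0N : u0 ∈ N := by simp [hN, hadj0]
    rw [hsum, ← Finset.add_sum_erase _ _ hu0N]
    set e : ℕ := n - d v with he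
    have hmain : w v - w u0 = B ^ (e + 1) - B ^ e := by
      show (B ^ n - B ^ (n - d v)) - (B ^ n - B ^ (n - d u0)) = _
      have h1 : n - d u0 = e + 1 := by
        have := hdlt v
        rw [he]
        omega
      rw [h1]; ring
    have hterm : ∀ u ∈ N.erase u0, (1 : ℤ) - B ^ e ≤ w v - w u := by
      intro u _
      show (1:ℤ) - B ^ e ≤ (B ^ n - B ^ (n - d v)) - (B ^ n - B ^ (n - d u))
      have h1 : (1:ℤ) ≤ B ^ (n - d u) := one_le_pow₀ hB1
      rw [← he]
      omega
    have hsum2 : ((N.erase u0).card : ℤ) • ((1:ℤ) - B ^ e) ≤ ∑ u ∈ N.erase u0, (w v - w u) := by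
      have := Finset.card_nsmul_le_sum (N.erase u0) (fun u => w v - w u) ((1:ℤ) - B ^ e) hterm
      simpa using this
    have hcard : ((N.erase u0).card : ℤ) ≤ (n : ℤ) - 2 := by
      have h1 : N.card ≤ n - 1 := by
        have : N.card = G.degree v := by
          rw [hN, ← SimpleGraph.neighborFinset_eq_filter]
          rfl
        have h2 := G.degree_lt_card_verts v
        omega
      have h2 : (N.erase u0).card = N.card - 1 := Finset.card_erase_of_mem hu0N
      have h3 : 1 ≤ N.card := Finset.card_pos.mpr ⟨u0, hu0N⟩
      have : (N.erase u0).card ≤ n - 2 := by omega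
      omega
    have hBe : (1:ℤ) ≤ B ^ e := one_le_pow₀ hB1
    have hle : ((n : ℤ) - 2) * ((1:ℤ) - B ^ e) ≤ ((N.erase u0).card : ℤ) * ((1:ℤ) - B ^ e) := by
      apply mul_le_mul_of_nonpos_right hcard
      omega
    have hsmul : ((N.erase u0).card : ℤ) • ((1:ℤ) - B ^ e) = ((N.erase u0).card : ℤ) * ((1:ℤ) - B ^ e) := by
      simp [zsmul_eq_mul]
    rw [hsmul] at hsum2
    have hBe1 : B ^ (e + 1) = B * B ^ e := by ring
    have key : (1:ℤ) ≤ (B ^ (e+1) - B ^ e) + ((n:ℤ) - 2) * (1 - B ^ e) := by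
      rw [hBe1, hB]
      nlinarith [hBe]
    rw [hmain]
    calc (1:ℤ) ≤ (B ^ (e+1) - B ^ e) + ((n:ℤ) - 2) * (1 - B ^ e) := key
      _ ≤ (B ^ (e+1) - B ^ e) + ((N.erase u0).card : ℤ) * (1 - B ^ e) := by linarith
      _ ≤ (B ^ (e+1) - B ^ e) + ∑ u ∈ N.erase u0, (w v - w u) := by linarith

end Gon
section Gon2
open Finset
variable {V : Type*} [Fintype V] (G : SimpleGraph V)

lemma lap_add (x y : V → ℤ) : G.lap (x + y) = G.lap x + G.lap y := by
  funext v
  show _ = G.lap x v + G.lap y v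
  rw [SimpleGraph.lap, SimpleGraph.lap, SimpleGraph.lap, ← Finset.sum_add_distrib]
  refine Finset.sum_congr rfl fun u _ => ?_
  by_cases h : G.Adj v u <;> simp [h] <;> ring

lemma lap_indicator (A : Finset V) (v : V) :
    G.lap (fun u => if u ∈ A then (1:ℤ) else 0) v =
      if v ∈ A then ((univ.filter (fun u => G.Adj v u ∧ u ∉ A)).card : ℤ)
      else -(((univ.filter (fun u => G.Adj v u ∧ u ∈ A)).card : ℤ)) := by
  rw [SimpleGraph.lap]
  by_cases hv : v ∈ A
  · simp only [hv, if_true]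
    rw [Finset.card_filter]
    push_cast
    refine Finset.sum_congr rfl fun u _ => ?_
    by_cases h : G.Adj v u
    · by_cases hu : u ∈ A <;> simp [h, hu]
    · simp [h]
  · simp only [hv, if_false]
    rw [Finset.card_filter]
    push_cast
    rw [← Finset.sum_neg_distrib]
    refine Finset.sum_congr rfl fun u _ => ?_
    by_cases h : G.Adj v u
    · by_cases hu : u ∈ A <;> simp [h, hu]
    · simp [h]

lemma exists_reduced (hG : G.Connected) (q : V) (F : V → ℤ) :
    ∃ F' : V → ℤ, G.LinEquiv F F' ∧ (∀ v, v ≠ q → 0 ≤ F' v) ∧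
      ∀ A : Finset V, A.Nonempty → q ∉ A →
        ∃ v ∈ A, F' v < ((univ.filter (fun u => G.Adj v u ∧ u ∉ A)).card : ℤ) := by
  classical
  obtain ⟨w, hwq, hw0, hw1⟩ := exists_pot G hG q
  set S : Set (V → ℤ) := {F' | G.LinEquiv F F' ∧ ∀ v, v ≠ q → 0 ≤ F' v} with hSdef
  have hSne : ∃ F0, F0 ∈ S := by
    set t : ℤ := ∑ v, max 0 (-(F v)) with ht
    have ht0 : 0 ≤ t := Finset.sum_nonneg fun v _ => le_max_left _ _
    have htv : ∀ v, -(F v) ≤ t := by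
      intro v
      calc -(F v) ≤ max 0 (-(F v)) := le_max_right _ _
        _ ≤ t := Finset.single_le_sum (f := fun u => max 0 (-(F u))) (fun u _ => le_max_left _ _) (mem_univ v)
    refine ⟨F - G.lap (fun u => -t * w u), ⟨fun u => -t * w u, by ring⟩, ?_⟩
    intro v hv
    have h1 : G.lap (fun u => -t * w u) v = -t * G.lap w v := by
      rw [lap_intmul]
    have h2 : 1 ≤ G.lap w v := hw1 v hv
    have h3 : t ≤ t * G.lap w v := le_mul_of_one_le_right ht0 h2
    simp only [Pi.sub_apply, h1]
    have := htv v
    nlinarith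
  set Φ : (V → ℤ) → ℤ := fun F' => ∑ v, w v * F' v with hΦ
  have hΦ0 : ∀ F' ∈ S, 0 ≤ Φ F' := by
    intro F' hF'
    refine Finset.sum_nonneg fun v _ => ?_
    by_cases hv : v = q
    · rw [hv, hwq]; simp
    · exact mul_nonneg (hw0 v) (hF'.2 v hv)
  set T : Set ℕ := {k | ∃ F' ∈ S, Φ F' = (k : ℤ)} with hT
  have hTne : T.Nonempty := by
    obtain ⟨F0, hF0⟩ := hSne
    exact ⟨(Φ F0).toNat, F0, hF0, (Int.toNat_of_nonneg (hΦ0 F0 hF0)).symm⟩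
  obtain ⟨F', hF'S, hΦ'⟩ := Nat.sInf_mem hTne
  refine ⟨F', hF'S.1, hF'S.2, ?_⟩
  intro A hA hqA
  by_contra hcon
  push_neg at hcon
  set χ : V → ℤ := fun u => if u ∈ A then (1:ℤ) else 0 with hχ
  set F'' := F' - G.lap χ with hF''
  have hAq : ∀ v ∈ A, v ≠ q := fun v hv hvq => hqA (hvq ▸ hv)
  have hF''S : F'' ∈ S := by
    constructor
    · obtain ⟨x, hx⟩ := hF'S.1
      refine ⟨x + χ, ?_⟩
      rw [lap_add]
      rw [hF'']
      rw [← hx]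
      ring
    · intro v hv
      rw [hF'', Pi.sub_apply, lap_indicator]
      by_cases hvA : v ∈ A
      · simp only [hvA, if_true]
        have := hcon v hvA
        omega
      · simp only [hvA, if_false]
        have := hF'S.2 v hv
        have : (0:ℤ) ≤ ((univ.filter (fun u => G.Adj v u ∧ u ∈ A)).card : ℤ) := by positivity
        omega
  have hΦ'' : Φ F'' = Φ F' - ∑ v ∈ A, G.lap w v := by
    rw [hΦ]
    simp only [hF'', Pi.sub_apply, mul_sub]
    rw [Finset.sum_sub_distrib]
    congr 1
    rw [lap_mul_symm]
    rw [hχ]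
    simp only [ite_mul, one_mul, zero_mul]
    rw [Finset.sum_ite_mem, Finset.univ_inter]
  have hdrop : (1:ℤ) ≤ ∑ v ∈ A, G.lap w v := by
    calc (1:ℤ) ≤ (A.card : ℤ) * 1 := by
          have : 1 ≤ A.card := Finset.card_pos.mpr hA
          push_cast
          nlinarith [this]
      _ ≤ ∑ v ∈ A, G.lap w v := by
          have := Finset.card_nsmul_le_sum A (fun v => G.lap w v) 1
            (fun v hv => hw1 v (hAq v hv))
          simpa using this
  have hlt : Φ F'' < Φ F' := by omega
  have : (Φ F'').toNat ∈ T := ⟨F'', hF''S, (Int.toNat_of_nonneg (hΦ0 F'' hF''S)).symm⟩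
  have hle := Nat.sInf_le this
  have h0'' := hΦ0 F'' hF''S
  omega
end Gon2
section Gon3
open Finset
variable {V : Type*} [Fintype V] (G : SimpleGraph V)

private def DharP (G : SimpleGraph V) (q : V) (F : V → ℤ) (S : Finset V) : Prop :=
  ∃ r : V → ℕ, Function.Injective r ∧
    (∀ u ∈ S, ∀ v, v ∉ S → r u < r v) ∧
    (∀ u, u ≠ q → r q < r u) ∧
    (∀ v ∈ S, v ≠ q → F v + 1 ≤ ((S.filter (fun u => G.Adj v u ∧ r u < r v)).card : ℤ))

private lemma dhar_base (q : V) (F : V → ℤ) : DharP G q F {q} := by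
  classical
  refine ⟨fun v => if v = q then 0 else (Fintype.equivFin V v : ℕ) + 1, ?_, ?_, ?_, ?_⟩
  · intro a b h
    by_cases ha : a = q <;> by_cases hb : b = q <;> simp [ha, hb] at h ⊢
    exact (Fintype.equivFin V).injective (Fin.ext h)
  · intro u hu v hv
    simp only [Finset.mem_singleton] at hu hv
    simp [hu, hv]
  · intro u hu
    simp [hu]
  · intro v hv hvq
    simp only [Finset.mem_singleton] at hv
    exact absurd hv hvq

private lemma dhar_step (q : V) (F : V → ℤ)
    (hred : ∀ A : Finset V, A.Nonempty → q ∉ A →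
        ∃ v ∈ A, F v < ((univ.filter (fun u => G.Adj v u ∧ u ∉ A)).card : ℤ))
    (S : Finset V) (hqS : q ∈ S) (hSuniv : S ≠ univ) (hP : DharP G q F S) :
    ∃ v, v ∉ S ∧ DharP G q F (insert v S) := by
  classical
  set A : Finset V := univ \ S with hA
  have hAne : A.Nonempty := by
    rw [Finset.sdiff_nonempty]
    intro hsub
    exact hSuniv (Finset.eq_univ_iff_forall.mpr fun v => hsub (mem_univ v))
  have hqA : q ∉ A := by simp [hA, hqS]
  obtain ⟨v, hvA, hvlt⟩ := hred A hAne hqA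
  have hvS : v ∉ S := by
    rw [hA] at hvA; simp at hvA; exact hvA
  have hfil : univ.filter (fun u => G.Adj v u ∧ u ∉ A) = S.filter (fun u => G.Adj v u) := by
    ext u
    simp [hA]
    tauto
  rw [hfil] at hvlt
  obtain ⟨r, hinj, hord, hqmin, hdeg⟩ := hP
  set M : ℕ := univ.sup r with hM
  have hMle : ∀ u, r u ≤ M := fun u => Finset.le_sup (mem_univ u)
  set r' : V → ℕ := fun u => if u = v then M + 1 else if u ∈ S then r u else r u + (M + 2)
    with hr'
  have hr'S : ∀ u ∈ S, r' u = r u := by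
    intro u hu
    have : u ≠ v := fun h => hvS (h ▸ hu)
    simp [hr', this, hu]
  have hr'v : r' v = M + 1 := by simp [hr']
  have hr'out : ∀ u, u ∉ S → u ≠ v → r' u = r u + (M + 2) := by
    intro u h1 h2
    simp [hr', h1, h2]
  refine ⟨v, hvS, ⟨r', ?_, ?_, ?_, ?_⟩⟩
  · intro a b h
    by_cases hav : a = v <;> by_cases hbv : b = v <;>
      by_cases haS : a ∈ S <;> by_cases hbS : b ∈ S <;>
      simp [hr', hav, hbv, haS, hbS] at h ⊢ <;>
      first
        | (exact hinj h)
        | (exact hinj (by omega))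
        | (have h1 := hMle a; have h2 := hMle b; omega)
  · intro u hu v' hv'
    have h1 : r' u ≤ M + 1 := by
      rcases Finset.mem_insert.mp hu with h | h
      · rw [h, hr'v]
      · rw [hr'S u h]; exact le_trans (hMle u) (Nat.le_succ M)
    have h2 : v' ∉ S := fun h => hv' (Finset.mem_insert_of_mem h)
    have h3 : v' ≠ v := fun h => hv' (h ▸ Finset.mem_insert_self v S)
    rw [hr'out v' h2 h3]
    omega
  · intro u hu
    have hqv : q ≠ v := fun h => hvS (h ▸ hqS)
    have hq' : r' q = r q := hr'S q hqS
    rw [hq']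
    by_cases huv : u = v
    · rw [huv, hr'v]
      have := hMle q
      omega
    · by_cases huS : u ∈ S
      · rw [hr'S u huS]; exact hqmin u hu
      · rw [hr'out u huS huv]
        have := hMle q
        omega
  · intro v' hv' hv'q
    rcases Finset.mem_insert.mp hv' with h | h
    · subst h
      have hsub : S.filter (fun u => G.Adj v' u) ⊆
          (insert v' S).filter (fun u => G.Adj v' u ∧ r' u < r' v') := by
        intro u hu
        rw [Finset.mem_filter] at hu ⊢
        refine ⟨Finset.mem_insert_of_mem hu.1, hu.2, ?_⟩
        rw [hr'S u hu.1, hr'v]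
        exact Nat.lt_succ_of_le (hMle u)
      have := Finset.card_le_card hsub
      have hc : (↑(S.filter (fun u => G.Adj v' u)).card : ℤ)
          ≤ ((insert v' S).filter (fun u => G.Adj v' u ∧ r' u < r' v')).card := by
        exact_mod_cast this
      omega
    · have hold := hdeg v' h hv'q
      have hsub : S.filter (fun u => G.Adj v' u ∧ r u < r v') ⊆
          (insert v S).filter (fun u => G.Adj v' u ∧ r' u < r' v') := by
        intro u hu
        rw [Finset.mem_filter] at hu ⊢
        refine ⟨Finset.mem_insert_of_mem hu.1, hu.2.1, ?_⟩
        rw [hr'S u hu.1, hr'S v' h]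
        exact hu.2.2
      have := Finset.card_le_card hsub
      have hc : (↑(S.filter (fun u => G.Adj v' u ∧ r u < r v')).card : ℤ)
          ≤ ((insert v S).filter (fun u => G.Adj v' u ∧ r' u < r' v')).card := by
        exact_mod_cast this
      omega

private lemma dhar_drive (q : V) (F : V → ℤ)
    (hred : ∀ A : Finset V, A.Nonempty → q ∉ A →
        ∃ v ∈ A, F v < ((univ.filter (fun u => G.Adj v u ∧ u ∉ A)).card : ℤ)) :
    ∀ k (S : Finset V), q ∈ S → (univ \ S).card ≤ k → DharP G q F S → DharP G q F univ := by
  intro k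
  induction k with
  | zero =>
    intro S hqS hcard hP
    have hemp : univ \ S = ∅ := Finset.card_eq_zero.mp (Nat.le_zero.mp hcard)
    have hS : S = univ := by
      apply Finset.eq_univ_iff_forall.mpr
      intro v
      by_contra hv
      have hmem : v ∈ univ \ S := Finset.mem_sdiff.mpr ⟨mem_univ v, hv⟩
      rw [hemp] at hmem
      simp at hmem
    rwa [hS] at hP
  | succ k ih =>
    intro S hqS hcard hP
    by_cases hS : S = univ
    · rwa [hS] at hP
    · obtain ⟨v, hvS, hP'⟩ := dhar_step G q F hred S hqS hS hP
      refine ih (insert v S) (Finset.mem_insert_of_mem hqS) ?_ hP'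
      have h1 : univ \ insert v S = (univ \ S).erase v := by
        ext u
        simp [Finset.mem_sdiff, Finset.mem_erase, Finset.mem_insert]
        try tauto
      rw [h1, Finset.card_erase_of_mem (Finset.mem_sdiff.mpr ⟨mem_univ v, hvS⟩)]
      omega

lemma dhar (q : V) (F : V → ℤ)
    (hred : ∀ A : Finset V, A.Nonempty → q ∉ A →
        ∃ v ∈ A, F v < ((univ.filter (fun u => G.Adj v u ∧ u ∉ A)).card : ℤ)) :
    ∃ r : V → ℕ, Function.Injective r ∧ (∀ u, u ≠ q → r q < r u) ∧
      ∀ v, v ≠ q → F v + 1 ≤ ((univ.filter (fun u => G.Adj v u ∧ r u < r v)).card : ℤ) := by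
  have := dhar_drive G q F hred (univ \ {q}).card {q} (Finset.mem_singleton_self q) le_rfl
    (dhar_base G q F)
  obtain ⟨r, hinj, _, hqmin, hdeg⟩ := this
  exact ⟨r, hinj, hqmin, fun v hv => hdeg v (mem_univ v) hv⟩

end Gon3
section Gon4
open Finset
variable {V : Type*} [Fintype V] (G : SimpleGraph V)

lemma deg_split (r : V → ℕ) (hinj : Function.Injective r) (v : V) :
    (univ.filter (fun u => G.Adj v u ∧ r u < r v)).card
      + (univ.filter (fun u => G.Adj v u ∧ r v < r u)).card = G.degree v := by
  classical
  have hdeg : G.degree v = (univ.filter (fun u => G.Adj v u)).card := by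
    rw [← SimpleGraph.neighborFinset_eq_filter]
    rfl
  have h1 : univ.filter (fun u => G.Adj v u ∧ r u < r v)
      = (univ.filter (fun u => G.Adj v u)).filter (fun u => r u < r v) := by
    rw [Finset.filter_filter]
  have h2 : univ.filter (fun u => G.Adj v u ∧ r v < r u)
      = (univ.filter (fun u => G.Adj v u)).filter (fun u => ¬ (r u < r v)) := by
    rw [Finset.filter_filter]
    apply Finset.filter_congr
    intro u _
    constructor
    · intro ⟨ha, hlt⟩; exact ⟨ha, by omega⟩
    · intro ⟨ha, hnlt⟩
      refine ⟨ha, ?_⟩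
      have hne : r u ≠ r v := fun h => (G.ne_of_adj ha) (hinj h).symm
      omega
  rw [h1, h2, hdeg]
  exact Finset.card_filter_add_card_filter_not _

lemma sum_indeg (r : V → ℕ) (hinj : Function.Injective r) :
    ∑ v, (univ.filter (fun u => G.Adj v u ∧ r u < r v)).card = G.edgeFinset.card := by
  classical
  have hswap : ∑ v, (univ.filter (fun u => G.Adj v u ∧ r u < r v)).card
      = ∑ v, (univ.filter (fun u => G.Adj v u ∧ r v < r u)).card := by
    simp only [Finset.card_filter]
    rw [Finset.sum_comm]
    refine Finset.sum_congr rfl fun u _ => Finset.sum_congr rfl fun v _ => ?_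
    by_cases h : G.Adj v u
    · simp [h, h.symm]
    · have : ¬ G.Adj u v := fun h2 => h h2.symm
      simp [h, this]
  have hsplit : ∑ v, ((univ.filter (fun u => G.Adj v u ∧ r u < r v)).card
      + (univ.filter (fun u => G.Adj v u ∧ r v < r u)).card) = 2 * G.edgeFinset.card := by
    rw [← SimpleGraph.sum_degrees_eq_twice_card_edges]
    exact Finset.sum_congr rfl fun v _ => deg_split G r hinj v
  rw [Finset.sum_add_distrib] at hsplit
  omega

lemma nu_not_equiv_eff (r : V → ℕ) (hinj : Function.Injective r) (H : V → ℤ)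
    (hH : SimpleGraph.Effective H) (x : V → ℤ)
    (heq : ∀ v, ((univ.filter (fun u => G.Adj v u ∧ r u < r v)).card : ℤ) - 1 - H v
        = G.lap x v) (hne : Nonempty V) : False := by
  classical
  have huniv : (univ : Finset V).Nonempty := Finset.univ_nonempty
  have himg : (univ.image x).Nonempty := huniv.image x
  set m : ℤ := (univ.image x).max' himg with hm
  set A : Finset V := univ.filter (fun v => x v = m) with hA
  have hAne : A.Nonempty := by
    obtain ⟨v, _, hv⟩ := Finset.mem_image.mp ((univ.image x).max'_mem himg)
    exact ⟨v, by simp [hA, hv, hm]⟩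
  obtain ⟨v, hvA, hvmin⟩ := Finset.exists_min_image A r hAne
  have hxv : x v = m := (Finset.mem_filter.mp hvA).2
  have hmax : ∀ u, x u ≤ m := fun u =>
    Finset.le_max' _ _ (Finset.mem_image_of_mem x (mem_univ u))
  have hbound : ∀ u, (if G.Adj v u ∧ r u < r v then (1:ℤ) else 0)
      ≤ (if G.Adj v u then x v - x u else 0) := by
    intro u
    by_cases hadj : G.Adj v u
    · by_cases hlt : r u < r v
      · simp only [hadj, hlt, and_self, if_true]
        have huA : u ∉ A := by
          intro huA
          exact absurd (hvmin u huA) (by omega)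
        have hxu : x u ≠ m := fun h => huA (by simp [hA, h])
        have := hmax u
        omega
      · simp only [hadj, hlt, and_false, if_false, if_true]
        have := hmax u
        omega
    · simp [hadj]
  have hsum : ((univ.filter (fun u => G.Adj v u ∧ r u < r v)).card : ℤ) ≤ G.lap x v := by
    rw [SimpleGraph.lap, Finset.card_filter]
    push_cast
    exact Finset.sum_le_sum fun u _ => hbound u
  have h1 := heq v
  have h2 := hH v
  omega

end Gon4
section Gon5
open Finset
variable {V : Type*} [Fintype V] (G : SimpleGraph V)

lemma linequiv_sum_eq (D D' : V → ℤ) (h : G.LinEquiv D D') : ∑ v, D v = ∑ v, D' v := by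
  obtain ⟨x, hx⟩ := h
  have h1 : ∑ v, (D v - D' v) = ∑ v, G.lap x v := by
    refine Finset.sum_congr rfl fun v _ => ?_
    exact congrFun hx v
  rw [sum_lap] at h1
  rw [Finset.sum_sub_distrib] at h1
  omega

lemma mirror_effective (hG : G.Connected) (H : V → ℤ) (hH : SimpleGraph.Effective H)
    (hdeg : ∑ v, H v = (G.edgeFinset.card : ℤ) - (Fintype.card V : ℤ)) :
    ∃ E : V → ℤ, SimpleGraph.Effective E ∧
      G.LinEquiv (fun v => (G.degree v : ℤ) - 2 - H v) E := by
  classical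
  have hne : Nonempty V := hG.nonempty
  set q : V := Classical.arbitrary V with hq0
  set F : V → ℤ := fun v => (G.degree v : ℤ) - 2 - H v with hF
  obtain ⟨F', hFF', hF'0, hF'red⟩ := exists_reduced G hG q F
  by_cases hq : 0 ≤ F' q
  · refine ⟨F', ?_, hFF'⟩
    intro v
    by_cases hv : v = q
    · rw [hv]; exact hq
    · exact hF'0 v hv
  · exfalso
    push_neg at hq
    obtain ⟨r, hinj, hqmin, hdh⟩ := dhar G q F' hF'red
    set ν : V → ℤ := fun v => ((univ.filter (fun u => G.Adj v u ∧ r u < r v)).card : ℤ) - 1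
      with hν
    have hνq : ν q = -1 := by
      have hfil : univ.filter (fun u => G.Adj q u ∧ r u < r q) = ∅ := by
        apply Finset.filter_eq_empty_iff.mpr
        intro u _
        rintro ⟨hadj, hlt⟩
        have : r q < r u := hqmin u (fun h => G.ne_of_adj hadj h.symm)
        omega
      simp [hν, hfil]
    have hle : ∀ v, F' v ≤ ν v := by
      intro v
      by_cases hv : v = q
      · rw [hv, hνq]; omega
      · have := hdh v hv
        simp only [hν]
        omega
    -- sums
    have hsumdeg : ∑ v, (G.degree v : ℤ) = 2 * (G.edgeFinset.card : ℤ) := by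
      exact_mod_cast congrArg (Nat.cast : ℕ → ℤ) (SimpleGraph.sum_degrees_eq_twice_card_edges G)
    have hsumF : ∑ v, F v
        = (G.edgeFinset.card : ℤ) - (Fintype.card V : ℤ) := by
      rw [hF]
      simp only
      rw [Finset.sum_sub_distrib, Finset.sum_sub_distrib, hsumdeg, hdeg]
      simp [Finset.card_univ]
      ring
    have hsumν : ∑ v, ν v = (G.edgeFinset.card : ℤ) - (Fintype.card V : ℤ) := by
      rw [hν]
      simp only
      rw [Finset.sum_sub_distrib]
      have := sum_indeg G r hinj
      have hcast : ∑ v, ((univ.filter (fun u => G.Adj v u ∧ r u < r v)).card : ℤ)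
          = (G.edgeFinset.card : ℤ) := by exact_mod_cast this
      rw [hcast]
      simp [Finset.card_univ]
    have hsumF' : ∑ v, F' v = ∑ v, ν v := by
      rw [← linequiv_sum_eq G F F' hFF', hsumF, hsumν]
    have hFν : ∀ v, F' v = ν v := by
      intro v
      exact (Finset.sum_eq_sum_iff_of_le (fun i _ => hle i)).mp hsumF' v (mem_univ v)
    -- build reversed order
    obtain ⟨x, hx⟩ := hFF'
    set M : ℕ := univ.sup r with hM
    have hMle : ∀ u, r u ≤ M := fun u => Finset.le_sup (mem_univ u)
    set r' : V → ℕ := fun u => M - r u with hr'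
    have hinj' : Function.Injective r' := by
      intro a b h
      apply hinj
      have h1 := hMle a
      have h2 := hMle b
      simp only [hr'] at h
      omega
    have hfil' : ∀ v, univ.filter (fun u => G.Adj v u ∧ r' u < r' v)
        = univ.filter (fun u => G.Adj v u ∧ r v < r u) := by
      intro v
      apply Finset.filter_congr
      intro u _
      have h1 := hMle u
      have h2 := hMle v
      constructor
      · rintro ⟨ha, hlt⟩
        refine ⟨ha, ?_⟩
        simp only [hr'] at hlt
        omega
      · rintro ⟨ha, hlt⟩
        have hru : r u ≠ r v := fun h => G.ne_of_adj ha (hinj h).symm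
        refine ⟨ha, ?_⟩
        simp only [hr']
        omega
    apply nu_not_equiv_eff G r' hinj' H hH x ?_ hne
    intro v
    have hdsplit := deg_split G r hinj v
    have hxv := congrFun hx v
    have hFv : F v = (G.degree v : ℤ) - 2 - H v := rfl
    have hF'v := hFν v
    have hνv : ν v = ((univ.filter (fun u => G.Adj v u ∧ r u < r v)).card : ℤ) - 1 := rfl
    rw [hfil' v]
    have hcast : ((univ.filter (fun u => G.Adj v u ∧ r u < r v)).card : ℤ)
        + ((univ.filter (fun u => G.Adj v u ∧ r v < r u)).card : ℤ) = (G.degree v : ℤ) := by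
      exact_mod_cast hdsplit
    have hxv' : F v - F' v = G.lap x v := hxv
    rw [hFv, hF'v, hνv] at hxv'
    omega

end Gon5
theorem gonality_le_genus {V : Type*} [Fintype V]
    (G : SimpleGraph V) (hG : G.Connected) (hg : 2 ≤ G.genus) :
    (G.gonality : ℤ) ≤ G.genus := by
  classical
  have hne : Nonempty V := hG.nonempty
  set n : ℕ := Fintype.card V with hn
  set m : ℕ := G.edgeFinset.card with hm
  have hgen : G.genus = (m : ℤ) - (n : ℤ) + 1 := by
    rw [SimpleGraph.genus]
    congr 2
    rw [Nat.card_coe_set_eq, Set.ncard_eq_toFinset_card']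
    rw [hm, SimpleGraph.edgeFinset]
  set g : ℤ := G.genus with hgdef
  obtain ⟨v0⟩ := hne
  set c : ℤ := g - 2 with hc
  have hc0 : 0 ≤ c := by omega
  set H : V → (V → ℤ) :=
    fun v => fun u => c * (if u = v0 then 1 else 0) + (if u = v then 1 else 0) with hH
  have hHeff : ∀ v, SimpleGraph.Effective (H v) := by
    intro v u
    simp only [hH]
    by_cases h1 : u = v0 <;> by_cases h2 : u = v <;> simp [h1, h2] <;> omega
  have hHsum : ∀ v, ∑ u, H v u = (m : ℤ) - (n : ℤ) := by
    intro v
    simp only [hH]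
    rw [Finset.sum_add_distrib, ← Finset.mul_sum]
    rw [Finset.sum_ite_eq' univ v0 (fun _ => (1:ℤ)), Finset.sum_ite_eq' univ v (fun _ => (1:ℤ))]
    simp only [mem_univ, if_true, mul_one]
    omega
  have hmirror := fun v => mirror_effective G hG (H v) (hHeff v) (hHsum v)
  choose E hEeff hEq using hmirror
  obtain ⟨x0, hx0⟩ := hEq v0
  set D : V → ℤ := fun u => E v0 u + (if u = v0 then 1 else 0) with hD
  have hDeff : SimpleGraph.Effective D := by
    intro u
    have := hEeff v0 u
    simp only [hD]
    by_cases h : u = v0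
    · have h2 := hEeff v0 v0
      subst h
      simp only [if_true]
      omega
    · simp only [h, if_false]
      have h2 := hEeff v0 u
      omega
  have hDpos : G.PosRank D := by
    intro v
    obtain ⟨xv, hxv⟩ := hEq v
    refine ⟨E v, hEeff v, ⟨fun u => xv u - x0 u, ?_⟩⟩
    have hls := lap_sub G xv x0
    funext u
    have h0 := congrFun hx0 u
    have hv := congrFun hxv u
    have hl := congrFun hls u
    simp only [Pi.sub_apply] at h0 hv hl ⊢
    simp only [hD, hH] at h0 hv ⊢
    have : G.lap (fun u => xv u - x0 u) = G.lap (xv - x0) := rfl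
    rw [this, hl]
    omega
  have hDsum : ∑ u, D u = g := by
    have h1 : ∑ u, E v0 u = ∑ u, ((G.degree u : ℤ) - 2 - H v0 u) :=
      (linequiv_sum_eq G _ _ ⟨x0, hx0⟩).symm
    have hsumdeg : ∑ v, (G.degree v : ℤ) = 2 * (m : ℤ) := by
      exact_mod_cast congrArg (Nat.cast : ℕ → ℤ) (SimpleGraph.sum_degrees_eq_twice_card_edges G)
    have h2 : ∑ u, ((G.degree u : ℤ) - 2 - H v0 u) = (m : ℤ) - (n : ℤ) := by
      rw [Finset.sum_sub_distrib, Finset.sum_sub_distrib, hsumdeg, hHsum v0]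
      simp [Finset.card_univ, ← hn]
      ring
    have h3 : ∑ u, D u = ∑ u, E v0 u + 1 := by
      simp only [hD]
      rw [Finset.sum_add_distrib, Finset.sum_ite_eq' univ v0 (fun _ => (1:ℤ))]
      simp
    rw [h3, h1, h2, hgen]
  set N : ℕ := g.toNat with hN
  have hNg : (N : ℤ) = g := Int.toNat_of_nonneg (by omega)
  have hmem : N ∈ {k : ℕ | ∃ D : V → ℤ, SimpleGraph.Effective D ∧ G.PosRank D
      ∧ (∑ v, D v) = (k : ℤ)} := ⟨D, hDeff, hDpos, by rw [hNg]; exact hDsum⟩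
  have hle : G.gonality ≤ N := Nat.sInf_le hmem
  calc (G.gonality : ℤ) ≤ (N : ℤ) := by exact_mod_cast hle
    _ = g := hNg
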